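/- arXiv:1701.03054 — 3 statements merged into one kernel-verified Lean document; each statement's English description precedes it below -/
import Mathlib

section
/- Let β be a cardinal with 1 < β ≤ α, let G be one of the Grassmannians G_β(V) or G^β(V), and let f : G → G be a bijection such that both f and f⁻¹ map every apartment of G onto an apartment of G. Then f is an automorphism of the Grassmann graph Γ(G): for all X, Y ∈ G, X and Y are adjacent if and only if f(X) and f(Y) are adjacent. -/
/- Setting: `V` is a left vector space over a division ring `K` whose dimension
`α = Module.rank K V` is an infinite cardinal. -/

universe u v w

section Defs

variable (K : Type u) (V : Type v) [DivisionRing K] [AddCommGroup V] [Module K V]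

/-- `B ⊆ V` is a basis of `V`, given as a set of vectors. -/
def IsBasisSet (B : Set V) : Prop :=
  LinearIndependent K ((↑) : B → V) ∧ Submodule.span K B = ⊤

/-- The Grassmannian `G_β(V)`: all subspaces of dimension `β` and codimension `α`. -/
def Gsub (β : Cardinal.{v}) : Set (Submodule K V) :=
  {X | Module.rank K ↥X = β ∧ Module.rank K (V ⧸ X) = Module.rank K V}

/-- The Grassmannian `G^β(V)`: all subspaces of dimension `α` and codimension `β`. -/
def Gsup (β : Cardinal.{v}) : Set (Submodule K V) :=
  {X | Module.rank K ↥X = Module.rank K V ∧ Module.rank K (V ⧸ X) = β}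

/-- The apartment of a Grassmannian `G` defined by a basis `B`:
all elements of `G` spanned by subsets of `B`. -/
def apartmentOf (G : Set (Submodule K V)) (B : Set V) : Set (Submodule K V) :=
  {X | X ∈ G ∧ ∃ S ⊆ B, X = Submodule.span K S}

/-- `X` and `Y` are adjacent: `X ∩ Y` has codimension 1 in both `X` and `Y`,
i.e. `dim X/(X∩Y) = dim Y/(X∩Y) = 1`. -/
def AdjacentSub (X Y : Submodule K V) : Prop :=
  Module.rank K (↥X ⧸ Submodule.comap X.subtype (X ⊓ Y)) = 1 ∧
  Module.rank K (↥Y ⧸ Submodule.comap Y.subtype (X ⊓ Y)) = 1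

end Defs

/-!
Inside the apartment of a basis `B`, the maximal proper intersections with other apartments (the
maximal inexact subsets) are exactly the sets `A_ij = {X | i ∈ X → j ∈ X}` (`apartmentImp`) for
distinct `i, j ∈ B`. The key point is that a subset of two apartments separating all pairs of
vectors of `B` forces the apartments to coincide: it pins down every line spanned by a vector of
`B`, and an apartment is determined by these lines. The opposite of `A_ij`, characterised through
unions of maximal inexact subsets only, is `A_ji`; and `span S`, `span T` are adjacent exactly
when a unique opposite pair `(A_ij, A_ji)` satisfies `span S ∉ A_ij`, `span T ∉ A_ji`, since these
pairs correspond to `(S \ T) × (T \ S)`. All of this is phrased in terms of apartments,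
intersections and unions, so it is transported by `f` and `f⁻¹`; as adjacent subspaces lie in a
common apartment, `f` preserves adjacency.
-/

open Submodule Set Cardinal

variable {K : Type u} {V : Type v} [DivisionRing K] [AddCommGroup V] [Module K V]

theorem span_insert_add_of_mem {R M : Type*} [Ring R] [AddCommGroup M] [Module R M]
    {s : Set M} {x y : M} (hy : y ∈ span R s) :
    span R (insert (x + y) s) = span R (insert x s) := by
  have hx : x ∈ R ∙ (x + y) ⊔ span R s := by
    simpa using sub_mem (mem_sup_left (mem_span_singleton_self (x + y))) (mem_sup_right hy)
  have hxy : x + y ∈ R ∙ x ⊔ span R s :=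
    add_mem (mem_sup_left (mem_span_singleton_self x)) (mem_sup_right hy)
  rw [span_insert, span_insert]
  exact le_antisymm (sup_le (span_singleton_le_iff_mem _ _ |>.2 hxy) le_sup_right)
    (sup_le (span_singleton_le_iff_mem _ _ |>.2 hx) le_sup_right)

theorem rank_sup_quotient_of_disjoint {R M : Type*} [Ring R] [AddCommGroup M] [Module R M]
    {p q : Submodule R M} (h : Disjoint p q) :
    Module.rank R (↥(p ⊔ q) ⧸ comap (p ⊔ q).subtype q) = Module.rank R p := by
  rw [← (LinearMap.quotientInfEquivSupQuotient p q).rank_eq, comap_subtype_self, top_inf_eq,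
    disjoint_iff_comap_eq_bot.1 h]
  exact (quotEquivOfEqBot ⊥ rfl).rank_eq

theorem exists_subset_span_eq_of_image_span_singleton_subset {R M : Type*} [Semiring R]
    [AddCommMonoid M] [Module R M] {B C S : Set M}
    (h : (R ∙ ·) '' B ⊆ (R ∙ ·) '' C) (hS : S ⊆ B) :
    ∃ U ⊆ C, span R S = span R U := by
  refine ⟨{c ∈ C | (R ∙ c) ∈ (R ∙ ·) '' S}, sep_subset _ _, ?_⟩
  have hlines : (R ∙ ·) '' {c ∈ C | (R ∙ c) ∈ (R ∙ ·) '' S} = (R ∙ ·) '' S := by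
    refine subset_antisymm (fun _ ⟨c, hc, he⟩ => he ▸ hc.2) ?_
    rintro _ ⟨s, hs, rfl⟩
    obtain ⟨c, hc, he⟩ := h ⟨s, hS hs, rfl⟩
    exact ⟨c, ⟨hc, s, hs, he.symm⟩, he⟩
  rw [span_eq_iSup_of_singleton_spans, span_eq_iSup_of_singleton_spans, ← sSup_image,
    ← sSup_image, hlines]

theorem Cardinal.exists_subset_mk_eq_and_mk_sdiff_eq {α : Type v} {s : Set α}
    {κ ρ : Cardinal.{v}} (h : #s = κ + ρ) : ∃ t ⊆ s, #t = κ ∧ #(s \ t : Set α) = ρ := by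
  obtain ⟨e⟩ : Nonempty (s ≃ κ.out ⊕ ρ.out) := Cardinal.eq.1 (by simp [h])
  have hcard : ∀ X, #(e ⁻¹' X) = #X := fun X => by
    rw [← e.image_symm_eq_preimage, mk_image_eq e.symm.injective]
  refine ⟨(↑) '' (e ⁻¹' range Sum.inl), Subtype.coe_image_subset _ _, ?_, ?_⟩
  · rw [mk_image_eq Subtype.val_injective, hcard, mk_range_eq _ Sum.inl_injective, mk_out]
  · rw [← image_val_compl, ← preimage_compl, compl_range_inl,
      mk_image_eq Subtype.val_injective, hcard, mk_range_eq _ Sum.inr_injective, mk_out]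

theorem Cardinal.exists_superset_mk_eq_and_mk_sdiff_eq {α : Type v} {B F₁ F₂ : Set α}
    {μ ν : Cardinal.{v}} (hB : ℵ₀ ≤ #B) (hsum : μ + ν = #B) (h₁ : F₁ ⊆ B)
    (h₂ : F₂ ⊆ B) (hd : Disjoint F₁ F₂) (hf₁ : F₁.Finite) (hf₂ : F₂.Finite) (hμ : #F₁ ≤ μ)
    (hν : #F₂ ≤ ν) :
    ∃ S, F₁ ⊆ S ∧ S ⊆ B \ F₂ ∧ #S = μ ∧ #(B \ S : Set α) = ν := by
  obtain ⟨μ₀, rfl⟩ := le_iff_exists_add.1 hμ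
  obtain ⟨ν₀, rfl⟩ := le_iff_exists_add.1 hν
  have hn : #F₁ + #F₂ < ℵ₀ := add_lt_aleph0 hf₁.lt_aleph0 hf₂.lt_aleph0
  have absorb : ∀ x, ℵ₀ ≤ x + (#F₁ + #F₂) → x + (#F₁ + #F₂) = x := fun x hx =>
    have hx : ℵ₀ ≤ x := (aleph0_le_add_iff.1 hx).resolve_right hn.not_ge
    add_eq_left hx (hn.le.trans hx)
  have hB₀ : #(B \ (F₁ ∪ F₂) : Set α) = μ₀ + ν₀ := by
    have h₀ : #(B \ (F₁ ∪ F₂) : Set α) + (#F₁ + #F₂) = #B := by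
      rw [← mk_union_of_disjoint hd, mk_sdiff_add_mk (union_subset h₁ h₂)]
    have h₀' : μ₀ + ν₀ + (#F₁ + #F₂) = #B := by rw [← hsum]; ring
    calc #(B \ (F₁ ∪ F₂) : Set α) = #(B \ (F₁ ∪ F₂) : Set α) + (#F₁ + #F₂) :=
          (absorb _ (hB.trans h₀.ge)).symm
      _ = μ₀ + ν₀ + (#F₁ + #F₂) := h₀.trans h₀'.symm
      _ = μ₀ + ν₀ := absorb _ (hB.trans h₀'.ge)
  obtain ⟨P, hP, hPμ, hPν⟩ := exists_subset_mk_eq_and_mk_sdiff_eq hB₀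
  have hPB : ∀ x ∈ P, x ∈ B ∧ x ∉ F₁ ∧ x ∉ F₂ := fun x hx => by
    have := hP hx; simp_all
  refine ⟨F₁ ∪ P, subset_union_left, ?_, ?_, ?_⟩
  · rintro x (hx | hx)
    · exact ⟨h₁ hx, disjoint_left.1 hd hx⟩
    · exact ⟨(hPB x hx).1, (hPB x hx).2.2⟩
  · rw [mk_union_of_disjoint (disjoint_right.2 fun x hx => (hPB x hx).2.1), hPμ]
  · have hcompl : B \ (F₁ ∪ P) = F₂ ∪ ((B \ (F₁ ∪ F₂)) \ P) := by
      ext x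
      have := @h₂ x
      have := @disjoint_left.1 hd x
      have := hPB x
      simp only [mem_sdiff, mem_union]
      tauto
    rw [hcompl, mk_union_of_disjoint (disjoint_left.2 fun x hx h => h.1.2 (Or.inr hx)), hPν]

theorem exists_le_span_singleton_sup_of_rank_quotient_eq_one {X Y : Submodule K V}
    (h : Module.rank K (X ⧸ comap X.subtype (X ⊓ Y)) = 1) :
    ∃ x ∈ X, x ∉ Y ∧ X ≤ K ∙ x ⊔ X ⊓ Y := by
  obtain ⟨q, hq0, hq⟩ := rank_eq_one_iff.1 h
  obtain ⟨x, rfl⟩ := Submodule.Quotient.mk_surjective _ q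
  refine ⟨x, x.2, fun hxY => hq0 ((Submodule.Quotient.mk_eq_zero _).2 ⟨x.2, hxY⟩),
    fun z hz => ?_⟩
  obtain ⟨r, hr⟩ := hq (Submodule.Quotient.mk ⟨z, hz⟩)
  rw [← Submodule.Quotient.mk_smul, Submodule.Quotient.eq] at hr
  refine mem_sup.2 ⟨r • x, smul_mem _ r (mem_span_singleton_self _), z - r • x, ?_, by simp⟩
  exact ⟨sub_mem hz (smul_mem _ _ x.2), by simpa using neg_mem hr⟩

theorem apartmentOf_eq_of_image_span_singleton_eq {G : Set (Submodule K V)} {B C : Set V}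
    (h : (K ∙ ·) '' B = (K ∙ ·) '' C) : apartmentOf K V G B = apartmentOf K V G C := by
  have key : ∀ {B C : Set V}, (K ∙ ·) '' B ⊆ (K ∙ ·) '' C →
      apartmentOf K V G B ⊆ apartmentOf K V G C := by
    rintro B C h X ⟨hXG, S, hS, rfl⟩
    obtain ⟨U, hU, he⟩ := exists_subset_span_eq_of_image_span_singleton_subset h hS
    exact ⟨hXG, U, hU, he⟩
  exact (key h.le).antisymm (key h.ge)

namespace IsBasisSet

variable {B C S T : Set V}

noncomputable def basis (hB : IsBasisSet K V B) : Module.Basis B K V :=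
  .mk hB.1 (by rw [Subtype.range_coe]; exact hB.2.ge)

theorem coe_basis (hB : IsBasisSet K V B) : ⇑hB.basis = ((↑) : B → V) :=
  Module.Basis.coe_mk _ _

theorem image_basis_preimage (hB : IsBasisSet K V B) (hS : S ⊆ B) :
    hB.basis '' ((↑) ⁻¹' S) = S := by
  rw [coe_basis, Subtype.image_preimage_coe, inter_eq_right.2 hS]

theorem mem_span_iff (hB : IsBasisSet K V B) (hS : S ⊆ B) {x : V} :
    x ∈ span K S ↔ ∀ i ∈ (hB.basis.repr x).support, (i : V) ∈ S := by
  conv_lhs => rw [← hB.image_basis_preimage hS]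
  exact Module.Basis.mem_span_image _

theorem mem_span_iff_mem (hB : IsBasisSet K V B) (hS : S ⊆ B) {v : V} (hv : v ∈ B) :
    v ∈ span K S ↔ v ∈ S := by
  have := hB.basis.self_mem_span_image (i := ⟨v, hv⟩) (s := (↑) ⁻¹' S)
  rwa [hB.image_basis_preimage hS, coe_basis] at this

theorem span_inf (hB : IsBasisSet K V B) (hS : S ⊆ B) (hT : T ⊆ B) :
    span K S ⊓ span K T = span K (S ∩ T) := by
  ext x
  simp only [mem_inf, hB.mem_span_iff hS, hB.mem_span_iff hT,
    hB.mem_span_iff (inter_subset_left.trans hS), mem_inter_iff]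
  exact forall₂_and.symm

theorem rank_span (hB : IsBasisSet K V B) (hS : S ⊆ B) : Module.rank K (span K S) = #S :=
  rank_span_set ((show LinearIndepOn K id B from hB.1).mono hS)

theorem rank_quotient_span (hB : IsBasisSet K V B) (hS : S ⊆ B) :
    Module.rank K (V ⧸ span K S) = #(B \ S : Set V) := by
  have hcompl : IsCompl (span K S) (span K (B \ S)) := by
    constructor
    · rw [disjoint_iff, hB.span_inf hS sdiff_subset, inter_sdiff_self, span_empty]
    · rw [codisjoint_iff, ← span_union, union_sdiff_cancel hS, hB.2]
  rw [(quotientEquivOfIsCompl _ _ hcompl).rank_eq, hB.rank_span sdiff_subset]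

theorem rank_quotient_span_inf (hB : IsBasisSet K V B) (hS : S ⊆ B) (hT : T ⊆ B) :
    Module.rank K (span K S ⧸ comap (span K S).subtype (span K S ⊓ span K T)) =
      #(S \ T : Set V) := by
  have hsplit : span K S = span K (S \ T) ⊔ span K (S ∩ T) := by
    rw [← span_union, sdiff_union_inter]
  have hdisj : Disjoint (span K (S \ T)) (span K (S ∩ T)) := by
    rw [disjoint_iff, hB.span_inf (sdiff_subset.trans hS) (inter_subset_left.trans hS),
      disjoint_sdiff_inter.inter_eq, span_empty]
  rw [hB.span_inf hS hT, hsplit, rank_sup_quotient_of_disjoint hdisj,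
    hB.rank_span (sdiff_subset.trans hS)]

theorem insert_add_sdiff_singleton (hB : IsBasisSet K V B) {i j : V} (hi : i ∈ B) (hj : j ∈ B)
    (hij : i ≠ j) : IsBasisSet K V (insert (i + j) (B \ {i})) := by
  have hj' : j ∈ span K (B \ {i}) := subset_span ⟨hj, hij ∘ Eq.symm⟩
  refine ⟨LinearIndepOn.id_insert ((show LinearIndepOn K id B from hB.1).mono sdiff_subset)
    fun h => ?_, ?_⟩
  · have : i ∈ span K (B \ {i}) := by simpa using sub_mem h hj'
    exact ((hB.mem_span_iff_mem sdiff_subset hi).1 this).2 rfl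
  · rw [span_insert_add_of_mem hj', insert_sdiff_singleton, insert_eq_of_mem hi, hB.2]

theorem adjacentSub_span (hB : IsBasisSet K V B) (hS : S ⊆ B) (hT : T ⊆ B)
    (hST : ∃ x, S \ T = {x}) (hTS : ∃ y, T \ S = {y}) :
    AdjacentSub K V (span K S) (span K T) := by
  obtain ⟨x, hx⟩ := hST
  obtain ⟨y, hy⟩ := hTS
  constructor
  · rw [hB.rank_quotient_span_inf hS hT, hx, mk_singleton]
  · rw [inf_comm, hB.rank_quotient_span_inf hT hS, hy, mk_singleton]

theorem image_span_singleton_eq_of_subset (hB : IsBasisSet K V B) (hC : IsBasisSet K V C)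
    (h : (K ∙ ·) '' B ⊆ (K ∙ ·) '' C) : (K ∙ ·) '' B = (K ∙ ·) '' C := by
  refine h.antisymm ?_
  rintro _ ⟨c, hc, rfl⟩
  by_contra hcB
  set C' := {c' ∈ C | (K ∙ c') ∈ (K ∙ ·) '' B}
  have hC' : span K C' = ⊤ := by
    refine eq_top_iff.2 (hB.2 ▸ span_le.2 fun k hk => ?_)
    obtain ⟨c', hc', he⟩ := h ⟨k, hk, rfl⟩
    have he : K ∙ c' = K ∙ k := he
    have hc'C' : c' ∈ C' := ⟨hc', k, hk, he.symm⟩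
    have hkc' : k ∈ K ∙ c' := he ▸ mem_span_singleton_self k
    exact span_mono (singleton_subset_iff.2 hc'C') hkc'
  have hcC' := (hC.mem_span_iff_mem (sep_subset _ _) hc).1 (hC' ▸ mem_top)
  exact hcB hcC'.2

theorem mem_span_singleton_of_separating (hB : IsBasisSet K V B) {R : Set (Submodule K V)}
    (hRB : ∀ X ∈ R, ∃ S ⊆ B, X = span K S) {k : V} (hk : k ∈ B)
    (hsep : ∀ i ∈ B, i ≠ k → ∃ X ∈ R, k ∈ X ∧ i ∉ X) {x : V}
    (hx : ∀ X ∈ R, k ∈ X → x ∈ X) : x ∈ K ∙ k := by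
  rw [hB.mem_span_iff (singleton_subset_iff.2 hk)]
  intro i hi
  by_contra hik
  obtain ⟨X, hXR, hkX, hiX⟩ := hsep i i.2 hik
  obtain ⟨S, hSB, rfl⟩ := hRB X hXR
  exact hiX (subset_span ((hB.mem_span_iff hSB).1 (hx _ hXR hkX) i hi))

theorem exists_mem_forall_mem_of_ne_zero (hC : IsBasisSet K V C) {R : Set (Submodule K V)}
    (hRC : ∀ X ∈ R, ∃ U ⊆ C, X = span K U) {k : V} (hk : k ≠ 0) :
    ∃ c ∈ C, ∀ X ∈ R, k ∈ X → c ∈ X := by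
  obtain ⟨i, hi⟩ := Finsupp.support_nonempty_iff.2
    ((LinearEquiv.map_ne_zero_iff hC.basis.repr).2 hk)
  refine ⟨i, i.2, fun X hXR hkX => ?_⟩
  obtain ⟨U, hUC, rfl⟩ := hRC X hXR
  exact subset_span ((hC.mem_span_iff hUC).1 hkX i hi)

theorem apartmentOf_eq_of_separating (hB : IsBasisSet K V B) (hC : IsBasisSet K V C)
    {G R : Set (Submodule K V)} (hRB : R ⊆ apartmentOf K V G B) (hRC : R ⊆ apartmentOf K V G C)
    (hsep : ∀ i ∈ B, ∀ j ∈ B, i ≠ j → ∃ X ∈ R, i ∈ X ∧ j ∉ X) :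
    apartmentOf K V G B = apartmentOf K V G C := by
  refine apartmentOf_eq_of_image_span_singleton_eq (hB.image_span_singleton_eq_of_subset hC ?_)
  rintro _ ⟨k, hk, rfl⟩
  obtain ⟨c, hc, hcR⟩ := hC.exists_mem_forall_mem_of_ne_zero (fun X hX => (hRC hX).2)
    (hB.1.ne_zero ⟨k, hk⟩)
  obtain ⟨r, rfl⟩ := mem_span_singleton.1 <| hB.mem_span_singleton_of_separating
    (fun X hX => (hRB hX).2) hk (fun i hi hik => hsep k hk i hi hik.symm) hcR
  have hr : r ≠ 0 := by rintro rfl; exact hC.1.ne_zero ⟨_, hc⟩ (zero_smul K k)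
  exact ⟨r • k, hc, span_singleton_smul_eq (Ne.isUnit hr) k⟩

end IsBasisSet

theorem AdjacentSub.exists_isBasisSet {X Y : Submodule K V} (h : AdjacentSub K V X Y) :
    ∃ B, IsBasisSet K V B ∧ ∃ S ⊆ B, ∃ T ⊆ B, X = span K S ∧ Y = span K T ∧
      (∃ x, S \ T = {x}) ∧ ∃ y, T \ S = {y} := by
  obtain ⟨x, hxX, hxY, hX⟩ := exists_le_span_singleton_sup_of_rank_quotient_eq_one h.1
  obtain ⟨y, hyY, hyX, hY⟩ :=
    exists_le_span_singleton_sup_of_rank_quotient_eq_one (inf_comm X Y ▸ h.2)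
  obtain ⟨C, hCXY, hCspan, hC⟩ := exists_linearIndependent K ((X ⊓ Y : Submodule K V) : Set V)
  rw [span_eq] at hCspan
  have hXC : span K (insert x C) = X := by
    rw [span_insert, hCspan]
    exact le_antisymm (sup_le (span_singleton_le_iff_mem _ _ |>.2 hxX) inf_le_left) hX
  have hYC : span K (insert y C) = Y := by
    rw [span_insert, hCspan, inf_comm]
    exact le_antisymm (sup_le (span_singleton_le_iff_mem _ _ |>.2 hyY) inf_le_left) hY
  have hli : LinearIndepOn K id (insert y (insert x C)) :=
    (LinearIndepOn.id_insert hC (by rw [hCspan]; exact fun h => hxY h.2)).id_insert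
      (by rw [hXC]; exact hyX)
  obtain ⟨B, -, hsub, hspan, hBli⟩ := exists_linearIndepOn_id_extension hli (subset_univ _)
  have hxC : x ∉ C := fun h => hxY (hCXY h).2
  have hyC : y ∉ C := fun h => hyX (hCXY h).1
  have hxy : x ≠ y := fun h => hyX (h ▸ hxX)
  have hSB : insert x C ⊆ B := (subset_insert _ _).trans hsub
  have hTB : insert y C ⊆ B := insert_subset (hsub (mem_insert _ _)) ((subset_insert x C).trans hSB)
  refine ⟨B, ⟨hBli, eq_top_iff.2 fun v _ => hspan (mem_univ v)⟩, _, hSB, _, hTB, hXC.symm,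
    hYC.symm, ⟨x, ?_⟩, ⟨y, ?_⟩⟩
  · ext z; simp only [mem_sdiff, mem_insert_iff, mem_singleton_iff]; grind
  · ext z; simp only [mem_sdiff, mem_insert_iff, mem_singleton_iff]; grind

structure IsGrassmannian (G : Set (Submodule K V)) (μ ν : Cardinal.{v}) : Prop where
  mem_iff : ∀ X, X ∈ G ↔ Module.rank K X = μ ∧ Module.rank K (V ⧸ X) = ν
  two_le_rank : 2 ≤ μ
  two_le_corank : 2 ≤ ν
  add_eq_rank : μ + ν = Module.rank K V
  aleph0_le_rank : ℵ₀ ≤ Module.rank K V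

def apartmentImp (G : Set (Submodule K V)) (B : Set V) (i j : V) : Set (Submodule K V) :=
  {X ∈ apartmentOf K V G B | i ∈ X → j ∈ X}

def IsApartment (G A : Set (Submodule K V)) : Prop :=
  ∃ B, IsBasisSet K V B ∧ A = apartmentOf K V G B

def inexactSubsets (G A : Set (Submodule K V)) : Set (Set (Submodule K V)) :=
  {M | (∃ A', IsApartment G A' ∧ M = A ∩ A') ∧ M ≠ A}

def IsMaximalInexact (G A M : Set (Submodule K V)) : Prop :=
  Maximal (· ∈ inexactSubsets G A) M

def IsOpposite (G A M N : Set (Submodule K V)) : Prop :=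
  IsMaximalInexact G A M ∧ IsMaximalInexact G A N ∧ M ∪ N = A ∧
    ∀ R, IsMaximalInexact G A R → R ∪ M = A → R ∪ N ≠ A

def separatingOpposites (G A : Set (Submodule K V)) (X Y : Submodule K V) :
    Set (Set (Submodule K V) × Set (Submodule K V)) :=
  {p | IsOpposite G A p.1 p.2 ∧ X ∉ p.1 ∧ Y ∉ p.2}

namespace IsBasisSet

variable {G : Set (Submodule K V)} {B S : Set V}

theorem apartmentImp_eq_inter (hB : IsBasisSet K V B) {i j : V} (hi : i ∈ B) (hj : j ∈ B)
    (hij : i ≠ j) :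
    apartmentImp G B i j =
      apartmentOf K V G B ∩ apartmentOf K V G (insert (i + j) (B \ {i})) := by
  ext X
  constructor
  · rintro ⟨⟨hXG, S, hSB, rfl⟩, himp⟩
    refine ⟨⟨hXG, S, hSB, rfl⟩, hXG, ?_⟩
    by_cases hiS : i ∈ S
    · have hjS : j ∈ S := (hB.mem_span_iff_mem hSB hj).1 (himp (subset_span hiS))
      refine ⟨insert (i + j) (S \ {i}), insert_subset_insert (sdiff_subset_sdiff_left hSB), ?_⟩
      have hj' : j ∈ span K (S \ {i}) := subset_span ⟨hjS, hij ∘ Eq.symm⟩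
      rw [span_insert_add_of_mem hj', insert_sdiff_singleton, insert_eq_of_mem hiS]
    · exact ⟨S, fun v hv => Or.inr ⟨hSB hv, fun h => hiS (h ▸ hv)⟩, rfl⟩
  · rintro ⟨⟨hXG, S, hSB, rfl⟩, -, U, hU, hSU⟩
    refine ⟨⟨hXG, S, hSB, rfl⟩, fun hiX => ?_⟩
    by_cases hijU : i + j ∈ U
    · simpa using sub_mem (hSU ▸ subset_span hijU : i + j ∈ span K S) hiX
    · have hUB : U ⊆ B \ {i} := fun v hv => (hU hv).resolve_left fun h => hijU (h ▸ hv)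
      have hiU : i ∈ U := (hB.mem_span_iff_mem (hUB.trans sdiff_subset) hi).1 (hSU ▸ hiX)
      exact ((hUB hiU).2 rfl).elim

theorem exists_apartmentImp_superset (hB : IsBasisSet K V B) {M : Set (Submodule K V)}
    (hM : M ∈ inexactSubsets G (apartmentOf K V G B)) :
    ∃ i ∈ B, ∃ j ∈ B, i ≠ j ∧ M ⊆ apartmentImp G B i j := by
  obtain ⟨⟨_, ⟨C, hC, rfl⟩, rfl⟩, hne⟩ := hM
  by_contra! h
  refine hne ?_
  rw [hB.apartmentOf_eq_of_separating hC inter_subset_left inter_subset_right ?_, inter_self]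
  intro i hi j hj hij
  obtain ⟨X, hX, hXij⟩ := not_subset.1 (h i hi j hj hij)
  refine ⟨X, hX, ?_⟩
  by_contra! hc
  exact hXij ⟨hX.1, hc⟩

theorem span_notMem_apartmentImp_iff (hB : IsBasisSet K V B) (hS : S ⊆ B) (hSG : span K S ∈ G)
    {i j : V} (hi : i ∈ B) (hj : j ∈ B) :
    span K S ∉ apartmentImp G B i j ↔ i ∈ S ∧ j ∉ S := by
  have hA : span K S ∈ apartmentOf K V G B := ⟨hSG, S, hS, rfl⟩
  change ¬(_ ∧ (i ∈ span K S → j ∈ span K S)) ↔ _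
  rw [hB.mem_span_iff_mem hS hi, hB.mem_span_iff_mem hS hj]
  tauto

end IsBasisSet

namespace IsGrassmannian

variable {G : Set (Submodule K V)} {μ ν : Cardinal.{v}} {B S T : Set V}

theorem exists_mem_apartmentOf (hG : IsGrassmannian G μ ν) (hB : IsBasisSet K V B)
    {a b c d : V} (ha : a ∈ B) (hb : b ∈ B) (hc : c ∈ B) (hd : d ∈ B)
    (hac : a ≠ c) (had : a ≠ d) (hbc : b ≠ c) (hbd : b ≠ d) :
    ∃ X ∈ apartmentOf K V G B, a ∈ X ∧ b ∈ X ∧ c ∉ X ∧ d ∉ X := by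
  have hpair : ∀ x y : V, #({x, y} : Set V) ≤ 2 := fun x y =>
    mk_insert_le.trans_eq (by rw [mk_singleton, one_add_one_eq_two])
  have hBrank : #B = Module.rank K V := hB.basis.mk_eq_rank''
  have hcdB : {c, d} ⊆ B := insert_subset hc (singleton_subset_iff.2 hd)
  obtain ⟨S, habS, hS, hSμ, hSν⟩ := exists_superset_mk_eq_and_mk_sdiff_eq
    (hBrank ▸ hG.aleph0_le_rank) (hBrank ▸ hG.add_eq_rank)
    (insert_subset ha (singleton_subset_iff.2 hb)) hcdB
    (by simp [hac.symm, had.symm, hbc.symm, hbd.symm]) (toFinite _) (toFinite _)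
    ((hpair a b).trans hG.two_le_rank) ((hpair c d).trans hG.two_le_corank)
  have hSB : S ⊆ B := hS.trans sdiff_subset
  have hnot : ∀ x ∈ ({c, d} : Set V), x ∉ span K S := fun x hx hxS =>
    (hS ((hB.mem_span_iff_mem hSB (hcdB hx)).1 hxS)).2 hx
  refine ⟨span K S, ⟨(hG.mem_iff _).2 ⟨by rw [hB.rank_span hSB, hSμ],
    by rw [hB.rank_quotient_span hSB, hSν]⟩, S, hSB, rfl⟩, subset_span (habS (by simp)),
    subset_span (habS (by simp)), hnot c (by simp), hnot d (by simp)⟩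

theorem eq_of_apartmentImp_subset (hG : IsGrassmannian G μ ν) (hB : IsBasisSet K V B)
    {i j k l : V} (hi : i ∈ B) (hj : j ∈ B) (hk : k ∈ B) (hl : l ∈ B) (hij : i ≠ j)
    (hkl : k ≠ l) (h : apartmentImp G B i j ⊆ apartmentImp G B k l) : i = k ∧ j = l := by
  by_contra hne
  obtain ⟨X, hX, hkX, hXij, hlX⟩ :
      ∃ X ∈ apartmentOf K V G B, k ∈ X ∧ (i ∈ X → j ∈ X) ∧ l ∉ X := by
    by_cases hki : k = i
    · subst hki
      have hjl : j ≠ l := fun h => hne ⟨rfl, h⟩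
      obtain ⟨X, hX, hkX, hjX, hlX, -⟩ :=
        hG.exists_mem_apartmentOf hB hk hj hl hl hkl hkl hjl hjl
      exact ⟨X, hX, hkX, fun _ => hjX, hlX⟩
    · obtain ⟨X, hX, hkX, -, hlX, hiX⟩ :=
        hG.exists_mem_apartmentOf hB hk hk hl hi hkl hki hkl hki
      exact ⟨X, hX, hkX, fun h => absurd h hiX, hlX⟩
  exact hlX ((h ⟨hX, hXij⟩).2 hkX)

theorem apartmentImp_ne (hG : IsGrassmannian G μ ν) (hB : IsBasisSet K V B) {i j : V}
    (hi : i ∈ B) (hj : j ∈ B) (hij : i ≠ j) :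
    apartmentImp G B i j ≠ apartmentOf K V G B := by
  intro h
  obtain ⟨X, hX, hiX, -, hjX, -⟩ := hG.exists_mem_apartmentOf hB hi hi hj hj hij hij hij hij
  exact hjX ((h.symm ▸ hX : X ∈ apartmentImp G B i j).2 hiX)

theorem apartmentImp_union_eq_iff (hG : IsGrassmannian G μ ν) (hB : IsBasisSet K V B)
    {i j k l : V} (hi : i ∈ B) (hj : j ∈ B) (hk : k ∈ B) (hl : l ∈ B) (hij : i ≠ j)
    (hkl : k ≠ l) :
    apartmentImp G B i j ∪ apartmentImp G B k l = apartmentOf K V G B ↔ i = l ∨ j = k := by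
  constructor
  · intro h
    by_contra! hne
    obtain ⟨X, hX, hiX, hkX, hjX, hlX⟩ :=
      hG.exists_mem_apartmentOf hB hi hk hj hl hij hne.1 hne.2.symm hkl
    rcases (h.symm ▸ hX : X ∈ apartmentImp G B i j ∪ apartmentImp G B k l) with hX' | hX'
    · exact hjX (hX'.2 hiX)
    · exact hlX (hX'.2 hkX)
  · intro h
    refine subset_antisymm (union_subset (sep_subset _ _) (sep_subset _ _)) fun X hX => ?_
    by_cases hiX : i ∈ X
    · by_cases hjX : j ∈ X
      · exact Or.inl ⟨hX, fun _ => hjX⟩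
      · refine Or.inr ⟨hX, fun hkX => ?_⟩
        rcases h with rfl | rfl
        · exact hiX
        · exact absurd hkX hjX
    · exact Or.inl ⟨hX, fun h => absurd h hiX⟩

theorem apartmentImp_mem_inexactSubsets (hG : IsGrassmannian G μ ν) (hB : IsBasisSet K V B)
    {i j : V} (hi : i ∈ B) (hj : j ∈ B) (hij : i ≠ j) :
    apartmentImp G B i j ∈ inexactSubsets G (apartmentOf K V G B) :=
  ⟨⟨_, ⟨_, hB.insert_add_sdiff_singleton hi hj hij, rfl⟩,
    hB.apartmentImp_eq_inter hi hj hij⟩,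
    hG.apartmentImp_ne hB hi hj hij⟩

theorem isMaximalInexact_iff (hG : IsGrassmannian G μ ν) (hB : IsBasisSet K V B)
    {M : Set (Submodule K V)} :
    IsMaximalInexact G (apartmentOf K V G B) M ↔
      ∃ i ∈ B, ∃ j ∈ B, i ≠ j ∧ M = apartmentImp G B i j := by
  constructor
  · intro hM
    obtain ⟨i, hi, j, hj, hij, hMij⟩ := hB.exists_apartmentImp_superset hM.prop
    exact ⟨i, hi, j, hj, hij,
      hM.eq_of_le (hG.apartmentImp_mem_inexactSubsets hB hi hj hij) hMij⟩
  · rintro ⟨i, hi, j, hj, hij, rfl⟩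
    refine ⟨hG.apartmentImp_mem_inexactSubsets hB hi hj hij, fun N hN hle => ?_⟩
    obtain ⟨k, hk, l, hl, hkl, hNkl⟩ := hB.exists_apartmentImp_superset hN
    obtain ⟨rfl, rfl⟩ := hG.eq_of_apartmentImp_subset hB hi hj hk hl hij hkl (hle.trans hNkl)
    exact hNkl

theorem isOpposite_apartmentImp_iff (hG : IsGrassmannian G μ ν) (hB : IsBasisSet K V B)
    {i j : V} (hi : i ∈ B) (hj : j ∈ B) (hij : i ≠ j) {N : Set (Submodule K V)} :
    IsOpposite G (apartmentOf K V G B) (apartmentImp G B i j) N ↔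
      N = apartmentImp G B j i := by
  have hmax : ∀ {k l}, k ∈ B → l ∈ B → k ≠ l →
      IsMaximalInexact G (apartmentOf K V G B) (apartmentImp G B k l) :=
    fun hk hl hkl => (hG.isMaximalInexact_iff hB).2 ⟨_, hk, _, hl, hkl, rfl⟩
  have hunion : ∀ {k l m n}, k ∈ B → l ∈ B → m ∈ B → n ∈ B → k ≠ l → m ≠ n →
      (apartmentImp G B k l ∪ apartmentImp G B m n = apartmentOf K V G B ↔ k = n ∨ l = m) :=
    hG.apartmentImp_union_eq_iff hB
  constructor
  · rintro ⟨-, hN, hMN, hR⟩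
    obtain ⟨s, hs, t, ht, hst, rfl⟩ := (hG.isMaximalInexact_iff hB).1 hN
    -- otherwise `apartmentImp G B t i` (when `s = j`) or `apartmentImp G B j s` (when `t = i`)
    -- has union `apartmentOf K V G B` with both of them
    by_cases hsj : s = j
    · subst hsj
      by_cases hti : t = i
      · rw [hti]
      exact absurd ((hunion ht hi hs ht hti hst).2 (Or.inl rfl))
        (hR _ (hmax ht hi hti) ((hunion ht hi hi hs hti hij).2 (Or.inr rfl)))
    · obtain rfl : i = t := ((hunion hi hj hs ht hij hst).1 hMN).resolve_right (Ne.symm hsj)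
      exact absurd ((hunion hj hs hs hi (Ne.symm hsj) hst).2 (Or.inr rfl))
        (hR _ (hmax hj hs (Ne.symm hsj)) ((hunion hj hs hi hj (Ne.symm hsj) hij).2 (Or.inl rfl)))
  · rintro rfl
    refine ⟨hmax hi hj hij, hmax hj hi hij.symm, (hunion hi hj hj hi hij hij.symm).2 (Or.inl rfl),
      fun R hR hRM hRN => ?_⟩
    obtain ⟨s, hs, t, ht, hst, rfl⟩ := (hG.isMaximalInexact_iff hB).1 hR
    have := (hunion hs ht hi hj hst hij).1 hRM
    have := (hunion hs ht hj hi hst hij.symm).1 hRN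
    grind

theorem mem_separatingOpposites_iff (hG : IsGrassmannian G μ ν) (hB : IsBasisSet K V B)
    (hS : S ⊆ B) (hT : T ⊆ B) (hSG : span K S ∈ G) (hTG : span K T ∈ G)
    {p : Set (Submodule K V) × Set (Submodule K V)} :
    p ∈ separatingOpposites G (apartmentOf K V G B) (span K S) (span K T) ↔
      ∃ i ∈ S \ T, ∃ j ∈ T \ S, p = (apartmentImp G B i j, apartmentImp G B j i) := by
  obtain ⟨M, N⟩ := p
  constructor
  · rintro ⟨hMN, hSM, hTN⟩
    obtain ⟨i, hi, j, hj, hij, rfl⟩ := (hG.isMaximalInexact_iff hB).1 hMN.1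
    obtain rfl := (hG.isOpposite_apartmentImp_iff hB hi hj hij).1 hMN
    rw [hB.span_notMem_apartmentImp_iff hS hSG hi hj] at hSM
    rw [hB.span_notMem_apartmentImp_iff hT hTG hj hi] at hTN
    exact ⟨i, ⟨hSM.1, hTN.2⟩, j, ⟨hTN.1, hSM.2⟩, rfl⟩
  · rintro ⟨i, ⟨hiS, hiT⟩, j, ⟨hjT, hjS⟩, he⟩
    obtain ⟨rfl, rfl⟩ := Prod.mk.inj he
    have hij : i ≠ j := fun h => hiT (h ▸ hjT)
    exact ⟨(hG.isOpposite_apartmentImp_iff hB (hS hiS) (hT hjT) hij).2 rfl,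
      (hB.span_notMem_apartmentImp_iff hS hSG (hS hiS) (hT hjT)).2 ⟨hiS, hjS⟩,
      (hB.span_notMem_apartmentImp_iff hT hTG (hT hjT) (hS hiS)).2 ⟨hjT, hiT⟩⟩

theorem exists_separatingOpposites_eq_singleton_iff (hG : IsGrassmannian G μ ν)
    (hB : IsBasisSet K V B) (hS : S ⊆ B) (hT : T ⊆ B) (hSG : span K S ∈ G)
    (hTG : span K T ∈ G) :
    (∃ p, separatingOpposites G (apartmentOf K V G B) (span K S) (span K T) = {p}) ↔
      (∃ a, S \ T = {a}) ∧ ∃ b, T \ S = {b} := by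
  have hmem := fun p => hG.mem_separatingOpposites_iff hB hS hT hSG hTG (p := p)
  constructor
  · rintro ⟨p, hp⟩
    obtain ⟨a, ha, b, hb, rfl⟩ := (hmem p).1 (hp ▸ mem_singleton p)
    have hunique : ∀ a' ∈ S \ T, ∀ b' ∈ T \ S, a' = a ∧ b' = b := fun a' ha' b' hb' => by
      have hp' := (hmem _).2 ⟨a', ha', b', hb', rfl⟩
      rw [hp, mem_singleton_iff, Prod.mk.injEq] at hp'
      exact hG.eq_of_apartmentImp_subset hB (hS ha'.1) (hT hb'.1) (hS ha.1) (hT hb.1)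
        (fun h => ha'.2 (h ▸ hb'.1)) (fun h => ha.2 (h ▸ hb.1)) hp'.1.le
    exact ⟨⟨a, eq_singleton_iff_unique_mem.2 ⟨ha, fun a' ha' => (hunique a' ha' b hb).1⟩⟩,
      ⟨b, eq_singleton_iff_unique_mem.2 ⟨hb, fun b' hb' => (hunique a ha b' hb').2⟩⟩⟩
  · rintro ⟨⟨a, ha⟩, ⟨b, hb⟩⟩
    exact ⟨(apartmentImp G B a b, apartmentImp G B b a), ext fun p => by simp [hmem, ha, hb]⟩

end IsGrassmannian

theorem IsApartment.subset {G A : Set (Submodule K V)} (hA : IsApartment G A) : A ⊆ G := by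
  obtain ⟨B, -, rfl⟩ := hA
  exact fun X hX => hX.1

theorem subset_of_mem_inexactSubsets {G A M : Set (Submodule K V)}
    (hM : M ∈ inexactSubsets G A) : M ⊆ A := by
  obtain ⟨⟨_, -, rfl⟩, -⟩ := hM
  exact inter_subset_left

section Transport

variable {G A M N : Set (Submodule K V)} {f g : Submodule K V → Submodule K V}

theorem image_mem_inexactSubsets (hgf : LeftInvOn g f G)
    (hf : ∀ A, IsApartment G A → IsApartment G (f '' A)) (hA : A ⊆ G)
    (hM : M ∈ inexactSubsets G A) : f '' M ∈ inexactSubsets G (f '' A) := by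
  obtain ⟨⟨A', hA', rfl⟩, hne⟩ := hM
  refine ⟨⟨f '' A', hf A' hA', hgf.injOn.image_inter hA hA'.subset⟩, ?_⟩
  rwa [Ne, hgf.injOn.image_eq_image_iff (inter_subset_left.trans hA) hA]

theorem IsMaximalInexact.image (hinv : InvOn g f G G)
    (hf : ∀ A, IsApartment G A → IsApartment G (f '' A))
    (hg : ∀ A, IsApartment G A → IsApartment G (g '' A)) (hA : IsApartment G A)
    (hM : IsMaximalInexact G A M) : IsMaximalInexact G (f '' A) (f '' M) := by
  have hfA : f '' A ⊆ G := (hf A hA).subset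
  refine ⟨image_mem_inexactSubsets hinv.1 hf hA.subset hM.prop, fun N hN hle => ?_⟩
  have hN' : g '' N ∈ inexactSubsets G A := by
    simpa only [hinv.1.image_image' hA.subset] using
      image_mem_inexactSubsets hinv.symm.1 hg hfA hN
  have hMN : M ⊆ g '' N := by
    rw [← hinv.1.image_image' ((subset_of_mem_inexactSubsets hM.prop).trans hA.subset)]
    exact image_mono hle
  rw [hM.eq_of_le hN' hMN, hinv.symm.1.image_image' ((subset_of_mem_inexactSubsets hN).trans hfA)]

theorem IsOpposite.image (hinv : InvOn g f G G)
    (hf : ∀ A, IsApartment G A → IsApartment G (f '' A))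
    (hg : ∀ A, IsApartment G A → IsApartment G (g '' A)) (hA : IsApartment G A)
    (h : IsOpposite G A M N) : IsOpposite G (f '' A) (f '' M) (f '' N) := by
  obtain ⟨hM, hN, hMN, hR⟩ := h
  refine ⟨hM.image hinv hf hg hA, hN.image hinv hf hg hA, by rw [← image_union, hMN],
    fun R hR' hRM hRN => ?_⟩
  have hpull : ∀ P, IsMaximalInexact G A P → R ∪ f '' P = f '' A → g '' R ∪ P = A :=
    fun P hP h => by
      rw [← hinv.1.image_image' ((subset_of_mem_inexactSubsets hP.prop).trans hA.subset),
        ← image_union, h, hinv.1.image_image' hA.subset]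
  have hgR : IsMaximalInexact G A (g '' R) := by
    simpa only [hinv.1.image_image' hA.subset] using hR'.image hinv.symm hg hf (hf A hA)
  exact hR _ hgR (hpull M hM hRM) (hpull N hN hRN)

theorem separatingOpposites_image (hinv : InvOn g f G G)
    (hf : ∀ A, IsApartment G A → IsApartment G (f '' A))
    (hg : ∀ A, IsApartment G A → IsApartment G (g '' A)) (hA : IsApartment G A)
    {X Y : Submodule K V} (hX : X ∈ A) (hY : Y ∈ A) :
    separatingOpposites G (f '' A) (f X) (f Y) =
      Prod.map (f '' ·) (f '' ·) '' separatingOpposites G A X Y := by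
  have hfA := hf A hA
  ext ⟨M', N'⟩
  constructor
  · rintro ⟨h, hXM, hYN⟩
    have hM'G : M' ⊆ G := (subset_of_mem_inexactSubsets h.1.prop).trans hfA.subset
    have hN'G : N' ⊆ G := (subset_of_mem_inexactSubsets h.2.1.prop).trans hfA.subset
    have hmem : ∀ {P Z}, P ⊆ G → Z ∈ A → (Z ∈ g '' P ↔ f Z ∈ P) := fun hP hZ => by
      simpa only [hinv.1 (hA.subset hZ)] using
        hinv.symm.1.injOn.mem_image_iff hP (hfA.subset (mem_image_of_mem f hZ))
    refine ⟨(g '' M', g '' N'),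
      ⟨?_, (hmem hM'G hX).not.2 hXM, (hmem hN'G hY).not.2 hYN⟩, ?_⟩
    · simpa only [hinv.1.image_image' hA.subset] using h.image hinv.symm hg hf hfA
    · exact Prod.ext (hinv.symm.1.image_image' hM'G) (hinv.symm.1.image_image' hN'G)
  · rintro ⟨⟨M, N⟩, ⟨h, hXM, hYN⟩, he⟩
    obtain ⟨rfl, rfl⟩ := Prod.mk.inj he
    have hinj := fun {P} (hP : P ⊆ A) {Z} (hZ : Z ∈ A) =>
      hinv.1.injOn.mem_image_iff (hP.trans hA.subset) (hA.subset hZ)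
    exact ⟨h.image hinv hf hg hA,
      (hinj (subset_of_mem_inexactSubsets h.1.prop) hX).not.2 hXM,
      (hinj (subset_of_mem_inexactSubsets h.2.1.prop) hY).not.2 hYN⟩

end Transport

theorem AdjacentSub.image {G : Set (Submodule K V)} {μ ν : Cardinal.{v}}
    {f g : Submodule K V → Submodule K V} (hG : IsGrassmannian G μ ν) (hinv : InvOn g f G G)
    (hf : ∀ A, IsApartment G A → IsApartment G (f '' A))
    (hg : ∀ A, IsApartment G A → IsApartment G (g '' A)) {X Y : Submodule K V} (hX : X ∈ G)
    (hY : Y ∈ G) (h : AdjacentSub K V X Y) : AdjacentSub K V (f X) (f Y) := by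
  obtain ⟨B, hB, S, hS, T, hT, rfl, rfl, hST, hTS⟩ := h.exists_isBasisSet
  have hA : IsApartment G (apartmentOf K V G B) := ⟨B, hB, rfl⟩
  have hXA : span K S ∈ apartmentOf K V G B := ⟨hX, S, hS, rfl⟩
  have hYA : span K T ∈ apartmentOf K V G B := ⟨hY, T, hT, rfl⟩
  obtain ⟨p, hp⟩ :=
    (hG.exists_separatingOpposites_eq_singleton_iff hB hS hT hX hY).2 ⟨hST, hTS⟩
  obtain ⟨B', hB', hA'⟩ := hf _ hA
  obtain ⟨hfXG, S', hS', hfX⟩ : f (span K S) ∈ apartmentOf K V G B' :=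
    hA' ▸ mem_image_of_mem f hXA
  obtain ⟨hfYG, T', hT', hfY⟩ : f (span K T) ∈ apartmentOf K V G B' :=
    hA' ▸ mem_image_of_mem f hYA
  have hp' := separatingOpposites_image hinv hf hg hA hXA hYA
  rw [hp, image_singleton, hA', hfX, hfY] at hp'
  simp only [hfX, hfY] at hfXG hfYG ⊢
  obtain ⟨hS'T', hT'S'⟩ :=
    (hG.exists_separatingOpposites_eq_singleton_iff hB' hS' hT' hfXG hfYG).1 ⟨_, hp'⟩
  exact hB'.adjacentSub_span hS' hT' hS'T' hT'S'

/-- Lemma 3: a bijective transformation `f` of `G` such that `f` and `f⁻¹` send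
apartments to apartments is an automorphism of the Grassmann graph `Γ(G)`. -/
theorem stmt9 (hα : Cardinal.aleph0 ≤ Module.rank K V)
    (β : Cardinal.{v}) (hβ1 : 1 < β) (hβ : β ≤ Module.rank K V)
    (G : Set (Submodule K V)) (hG : G = Gsub K V β ∨ G = Gsup K V β)
    (f g : Submodule K V → Submodule K V)
    (hbij : Set.BijOn f G G) (hinv : Set.InvOn g f G G)
    (hf : ∀ B : Set V, IsBasisSet K V B → ∃ B' : Set V, IsBasisSet K V B' ∧
      f '' apartmentOf K V G B = apartmentOf K V G B')
    (hg : ∀ B : Set V, IsBasisSet K V B → ∃ B' : Set V, IsBasisSet K V B' ∧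
      g '' apartmentOf K V G B = apartmentOf K V G B') :
    ∀ X ∈ G, ∀ Y ∈ G, (AdjacentSub K V X Y ↔ AdjacentSub K V (f X) (f Y)) := by
  obtain ⟨μ, ν, hGr⟩ : ∃ μ ν, IsGrassmannian G μ ν := by
    have h2β : 2 ≤ β := two_le_iff_one_lt.2 hβ1
    have h2α : 2 ≤ Module.rank K V := ofNat_lt_aleph0.le.trans hα
    rcases hG with rfl | rfl
    · exact ⟨β, _, fun _ => Iff.rfl, h2β, h2α, add_eq_right hα hβ, hα⟩
    · exact ⟨_, β, fun _ => Iff.rfl, h2α, h2β, add_eq_left hα hβ, hα⟩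
  have isApartment_image : ∀ {φ : Submodule K V → Submodule K V},
      (∀ B, IsBasisSet K V B → ∃ B', IsBasisSet K V B' ∧
        φ '' apartmentOf K V G B = apartmentOf K V G B') →
      ∀ A, IsApartment G A → IsApartment G (φ '' A) := by
    rintro φ hφ _ ⟨B, hB, rfl⟩
    exact hφ B hB
  intro X hX Y hY
  refine ⟨AdjacentSub.image hGr hinv (isApartment_image hf) (isApartment_image hg) hX hY,
    fun h => ?_⟩
  have := AdjacentSub.image hGr hinv.symm (isApartment_image hg) (isApartment_image hf)
    (hbij.mapsTo hX) (hbij.mapsTo hY) h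
  rwa [hinv.1 hX, hinv.1 hY] at this
end

section
/- Let G^1(V) be the Grassmannian of all hyperplanes of V (subspaces of dimension α and codimension 1), and let f : G^1(V) → G^1(V) be a bijection such that both f and f⁻¹ map every apartment of G^1(V) onto an apartment of G^1(V). Then for every 1-dimensional subspace P ⊆ V there exists a 1-dimensional subspace P' ⊆ V such that for every hyperplane X ∈ G^1(V): P ⊆ X if and only if P' ⊆ f(X). -/
/-!
Write `P = K ∙ v` and extend `v` to a basis `B`. Then `f` carries the apartment of `B` onto the
apartment of some basis `B'`, and the hyperplane spanned by `B \ {v}` to the one spanned by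
`B' \ {v'}`; take `P' = K ∙ v'`. Inside the apartment of `B`, the vector `v` lies in every
hyperplane except the one spanned by `B \ {v}`, whereas a nonzero vector misses some hyperplane
of every apartment. If `v ∈ X` but `v' ∉ f X`, a transvection along `v'` turns `B'` into a basis
whose apartment consists of `f X` and of hyperplanes of the apartment of `B'` other than
`f (span (B \ {v}))`. Its image under `g` is an apartment all of whose members contain `v`,
which is impossible. The converse is the same argument with the roles of `f` and `g` exchanged.
-/

/- Setting: `V` is a left vector space over a division ring `K` whose dimension
`α = Module.rank K V` is an infinite cardinal. -/

universe u v w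

variable {K : Type u} {V : Type v} [DivisionRing K] [AddCommGroup V] [Module K V]

open Submodule Set Cardinal

section Transvection

variable {R M : Type*} [Ring R] [AddCommGroup M] [Module R M]

lemma LinearEquiv.map_transvection_of_mem {f : Module.Dual R M} {v : M} (h : f v = 0)
    {W : Submodule R M} (hv : v ∈ W) :
    W.map (LinearEquiv.transvection h : M →ₗ[R] M) = W := by
  have hmem : ∀ x, LinearEquiv.transvection h x ∈ W ↔ x ∈ W := fun x => by
    rw [LinearEquiv.transvection.apply, Submodule.add_mem_iff_left _ (W.smul_mem _ hv)]
  ext y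
  rw [mem_map_equiv, ← hmem, LinearEquiv.apply_symm_apply]

lemma LinearEquiv.map_transvection_ker {φ ψ : Module.Dual R M} {v : M} (hψ : ψ v = 1)
    (h : (φ - ψ) v = 0) :
    (LinearMap.ker φ).map (LinearEquiv.transvection h : M →ₗ[R] M) = LinearMap.ker ψ := by
  have hcomp : ψ ∘ₗ (LinearEquiv.transvection h).toLinearMap = φ := by
    ext x
    simp [LinearMap.transvection.apply, hψ]
  have hker := LinearMap.ker_comp (LinearEquiv.transvection h : M →ₗ[R] M) ψ
  rw [hcomp] at hker
  rw [hker, map_comap_eq_of_surjective (LinearEquiv.surjective _)]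

end Transvection

namespace IsBasisSet

variable {B : Set V}

noncomputable def toBasis (hB : IsBasisSet K V B) : Module.Basis B K V :=
  Module.Basis.mk hB.1 (by rw [Subtype.range_coe, hB.2])

@[simp] lemma toBasis_apply (hB : IsBasisSet K V B) (i : B) : hB.toBasis i = i := by
  simp [toBasis]

lemma ne_zero (hB : IsBasisSet K V B) {x : V} (hx : x ∈ B) : x ≠ 0 :=
  hB.1.ne_zero ⟨x, hx⟩

lemma image_linearEquiv (hB : IsBasisSet K V B) (T : V ≃ₗ[K] V) : IsBasisSet K V (T '' B) :=
  ⟨LinearIndepOn.image (f := T.toLinearMap) hB.1 (by simp),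
    by rw [← LinearEquiv.coe_toLinearMap, ← map_span, hB.2, Submodule.map_top,
      LinearEquiv.range]⟩

lemma span_diff_singleton_eq_ker (hB : IsBasisSet K V B) (i : B) :
    span K (B \ {(i : V)}) = LinearMap.ker (hB.toBasis.coord i) := by
  ext w
  have hBi : B \ {(i : V)} = hB.toBasis '' {i}ᶜ := by
    rw [show ⇑hB.toBasis = (↑) from funext hB.toBasis_apply, image_val_compl, image_singleton]
  rw [hBi, Module.Basis.mem_span_image, LinearMap.mem_ker, Module.Basis.coord_apply,
    Set.subset_compl_singleton_iff, Finset.mem_coe, Finsupp.notMem_support_iff]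

lemma notMem_span_diff_singleton (hB : IsBasisSet K V B) {x : V} (hx : x ∈ B) :
    x ∉ span K (B \ {x}) := by
  simpa using LinearIndepOn.notMem_span (v := id) hB.1 hx

lemma exists_notMem_span_diff_singleton (hB : IsBasisSet K V B) {v : V} (hv : v ≠ 0) :
    ∃ x ∈ B, v ∉ span K (B \ {x}) := by
  obtain ⟨i, hi⟩ : ∃ i, hB.toBasis.repr v i ≠ 0 := by
    by_contra! h
    exact hv (hB.toBasis.repr.injective (by ext i; simp [h]))
  exact ⟨i, i.2, by simpa [hB.span_diff_singleton_eq_ker] using hi⟩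

lemma isCompl_span_diff_singleton (hB : IsBasisSet K V B) {x : V} (hx : x ∈ B) :
    IsCompl (span K (B \ {x})) (K ∙ x) :=
  ⟨disjoint_span_singleton_of_notMem (hB.notMem_span_diff_singleton hx), by
    rw [codisjoint_iff, sup_comm, ← span_insert, insert_sdiff_singleton, insert_eq_of_mem hx,
      hB.2]⟩

end IsBasisSet

variable (K) in
lemma exists_isBasisSet_mem {v : V} (hv : v ≠ 0) : ∃ B, IsBasisSet K V B ∧ v ∈ B := by
  obtain ⟨B, -, hvB, hspan, hli⟩ :=
    exists_linearIndepOn_id_extension (LinearIndepOn.singleton (R := K) (v := id) hv)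
      (subset_univ {v})
  exact ⟨B, ⟨hli, eq_top_iff.2 fun x _ => hspan (mem_univ x)⟩, hvB rfl⟩

section Hyperplane

variable {Y : Submodule K V} {u : V}

lemma isCompl_span_singleton_of_rank_quotient_eq_one (hY : Module.rank K (V ⧸ Y) = 1)
    (hu : u ∉ Y) : IsCompl Y (K ∙ u) := by
  refine ⟨disjoint_span_singleton_of_notMem hu, codisjoint_iff.2 ?_⟩
  have hu' : Y.mkQ u ≠ 0 := by simpa using hu
  have hspan : K ∙ Y.mkQ u = ⊤ :=
    (finrank_eq_one_iff_of_nonzero _ hu').1 (Module.rank_eq_one_iff_finrank_eq_one.1 hY)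
  rw [← comap_map_mkQ, map_span, image_singleton, hspan, comap_top]

lemma rank_quotient_eq_one_of_isCompl (h : IsCompl Y (K ∙ u)) (hu : u ≠ 0) :
    Module.rank K (V ⧸ Y) = 1 :=
  (Y.quotientEquivOfIsCompl _ h).rank_eq.trans
    (Module.rank_eq_one_iff_finrank_eq_one.2 (finrank_span_singleton hu))

lemma exists_dual_ker_eq_of_rank_quotient_eq_one (hY : Module.rank K (V ⧸ Y) = 1)
    (hu : u ∉ Y) : ∃ φ : Module.Dual K V, φ u = 1 ∧ LinearMap.ker φ = Y := by
  have h := (isCompl_span_singleton_of_rank_quotient_eq_one hY hu).symm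
  have hu0 : u ≠ 0 := fun h0 => hu (h0 ▸ Y.zero_mem)
  refine ⟨(LinearEquiv.coord K V u hu0).toLinearMap ∘ₗ projectionOnto _ _ h, ?_, ?_⟩
  · have hproj : projectionOnto _ _ h u = ⟨u, mem_span_singleton_self u⟩ :=
      projectionOnto_apply_left h ⟨u, _⟩
    simpa [hproj] using LinearEquiv.coord_self K V u hu0
  · rw [LinearEquiv.ker_comp, ker_projectionOnto]

lemma mem_Gsup_one_of_rank_quotient_eq_one (hα : ℵ₀ ≤ Module.rank K V)
    (hY : Module.rank K (V ⧸ Y) = 1) : Y ∈ Gsup K V 1 := by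
  have hsum := rank_quotient_add_rank Y
  rw [hY, add_comm] at hsum
  have hY_inf : ℵ₀ ≤ Module.rank K Y := by
    by_contra! hlt
    exact (hsum ▸ add_lt_aleph0 hlt one_lt_aleph0).not_ge hα
  exact ⟨by rw [← hsum, add_one_eq hY_inf], hY⟩

end Hyperplane

namespace IsBasisSet

variable {B : Set V}

lemma span_diff_singleton_mem_apartment (hα : ℵ₀ ≤ Module.rank K V) (hB : IsBasisSet K V B)
    {x : V} (hx : x ∈ B) : span K (B \ {x}) ∈ apartmentOf K V (Gsup K V 1) B :=
  ⟨mem_Gsup_one_of_rank_quotient_eq_one hα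
      (rank_quotient_eq_one_of_isCompl (hB.isCompl_span_diff_singleton hx) (hB.ne_zero hx)),
    _, sdiff_subset, rfl⟩

lemma exists_eq_span_diff_singleton_of_mem_apartment (hB : IsBasisSet K V B)
    {W : Submodule K V} (hW : W ∈ apartmentOf K V (Gsup K V 1) B) :
    ∃ x ∈ B, W = span K (B \ {x}) := by
  obtain ⟨⟨-, hcodim⟩, S, hSB, rfl⟩ := hW
  obtain ⟨x, hxB, hxS⟩ : ∃ x ∈ B, x ∉ span K S := by
    by_contra! h
    rw [show span K S = ⊤ from eq_top_iff.2 (hB.2 ▸ span_le.2 h)] at hcodim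
    simp at hcodim
  have hSx : S ⊆ B \ {x} := fun s hs => ⟨hSB hs, fun h => hxS (h ▸ subset_span hs)⟩
  refine ⟨x, hxB, le_antisymm (span_mono hSx) (span_le.2 fun y hyx => ?_)⟩
  by_contra hyS
  have hSy : S ⊆ B \ {y} := fun s hs => ⟨hSB hs, fun h => hyS (h ▸ subset_span hs)⟩
  have hy : y ∈ span K S ⊔ K ∙ x := by
    rw [(isCompl_span_singleton_of_rank_quotient_eq_one hcodim hxS).sup_eq_top]; trivial
  have hxy : K ∙ x ≤ span K (B \ {y}) :=
    (span_singleton_le_iff_mem _ _).2 (subset_span ⟨hxB, Ne.symm hyx.2⟩)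
  exact hB.notMem_span_diff_singleton hyx.1 (sup_le (span_mono hSy) hxy hy)

lemma mem_of_mem_apartment_of_ne (hB : IsBasisSet K V B) {v : V} (hv : v ∈ B)
    {W : Submodule K V} (hW : W ∈ apartmentOf K V (Gsup K V 1) B) (hne : W ≠ span K (B \ {v})) :
    v ∈ W := by
  obtain ⟨x, -, rfl⟩ := hB.exists_eq_span_diff_singleton_of_mem_apartment hW
  exact subset_span ⟨hv, fun hvx => hne (by rw [mem_singleton_iff.1 hvx])⟩

lemma exists_mem_apartment_notMem (hα : ℵ₀ ≤ Module.rank K V) (hB : IsBasisSet K V B)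
    {v : V} (hv : v ≠ 0) : ∃ W ∈ apartmentOf K V (Gsup K V 1) B, v ∉ W := by
  obtain ⟨x, hx, hvx⟩ := hB.exists_notMem_span_diff_singleton hv
  exact ⟨_, hB.span_diff_singleton_mem_apartment hα hx, hvx⟩

lemma exists_apartment_subset_insert (hα : ℵ₀ ≤ Module.rank K V) (hB : IsBasisSet K V B)
    {v : V} (hv : v ∈ B) {Y : Submodule K V} (hY : Module.rank K (V ⧸ Y) = 1) (hvY : v ∉ Y) :
    ∃ B', IsBasisSet K V B' ∧ apartmentOf K V (Gsup K V 1) B' ⊆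
      insert Y (apartmentOf K V (Gsup K V 1) B \ {span K (B \ {v})}) := by
  obtain ⟨φ, hφv, hφY⟩ := exists_dual_ker_eq_of_rank_quotient_eq_one hY hvY
  set c := hB.toBasis.coord ⟨v, hv⟩
  have hcv : c v = 1 := by
    simpa [c] using congrArg (· ⟨v, hv⟩) (hB.toBasis.repr_self ⟨v, hv⟩)
  have h : (c - φ) v = 0 := by simp [hcv, hφv]
  -- `T x = x + (c x - φ x) • v` fixes every subspace through `v` and carries
  -- `ker c = span K (B \ {v})` onto `ker φ = Y`.
  set T := LinearEquiv.transvection h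
  refine ⟨T '' B, hB.image_linearEquiv T, fun W hW => ?_⟩
  obtain ⟨_, ⟨x, hx, rfl⟩, rfl⟩ :=
    (hB.image_linearEquiv T).exists_eq_span_diff_singleton_of_mem_apartment hW
  have hTx : span K (T '' B \ {T x}) = (span K (B \ {x})).map (T : V →ₗ[K] V) := by
    rw [← image_singleton, ← image_sdiff T.injective]
    exact (map_span (T : V →ₗ[K] V) _).symm
  rw [hTx]
  by_cases hxv : x = v
  · subst hxv
    left
    rw [hB.span_diff_singleton_eq_ker ⟨x, hx⟩, LinearEquiv.map_transvection_ker hφv h, hφY]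
  · right
    rw [LinearEquiv.map_transvection_of_mem h (subset_span (s := B \ {x}) ⟨hv, Ne.symm hxv⟩)]
    refine ⟨hB.span_diff_singleton_mem_apartment hα hx, fun heq => ?_⟩
    exact hB.notMem_span_diff_singleton hx (heq ▸ subset_span ⟨hx, hxv⟩)

end IsBasisSet

def MapsApartments (f : Submodule K V → Submodule K V) : Prop :=
  ∀ B : Set V, IsBasisSet K V B → ∃ B' : Set V, IsBasisSet K V B' ∧
    f '' apartmentOf K V (Gsup K V 1) B = apartmentOf K V (Gsup K V 1) B'

lemma mem_apply_of_mem_of_image_apartment (hα : ℵ₀ ≤ Module.rank K V)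
    {f g : Submodule K V → Submodule K V}
    (hfG : MapsTo f (Gsup K V 1) (Gsup K V 1)) (hgf : LeftInvOn g f (Gsup K V 1))
    (hg : MapsApartments g) {B B' : Set V} (hB : IsBasisSet K V B) (hB' : IsBasisSet K V B')
    (hfB : f '' apartmentOf K V (Gsup K V 1) B = apartmentOf K V (Gsup K V 1) B')
    {v v' : V} (hv : v ∈ B) (hv' : v' ∈ B') (hfH : f (span K (B \ {v})) = span K (B' \ {v'}))
    {X : Submodule K V} (hX : X ∈ Gsup K V 1) (hvX : v ∈ X) : v' ∈ f X := by
  by_contra hv'X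
  obtain ⟨B₁, hB₁, hB₁A⟩ := hB'.exists_apartment_subset_insert hα hv' (hfG hX).2 hv'X
  obtain ⟨B₂, hB₂, hgB₁⟩ := hg B₁ hB₁
  obtain ⟨_, hZ, hvZ⟩ := hB₂.exists_mem_apartment_notMem hα (hB.ne_zero hv)
  obtain ⟨W, hW, rfl⟩ := hgB₁ ▸ hZ
  rcases hB₁A hW with rfl | ⟨hWB', hWH'⟩
  · exact hvZ (by rwa [hgf hX])
  · obtain ⟨U, hU, rfl⟩ := hfB ▸ hWB'
    rw [hgf hU.1] at hvZ
    exact hvZ (hB.mem_of_mem_apartment_of_ne hv hU fun hUH => hWH' (hUH ▸ hfH))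

/-- The case `β = 1` of Theorem 1 for `G^1(V)`: a bijective transformation `f` of the
Grassmannian of hyperplanes such that `f` and `f⁻¹` send apartments to apartments
induces a transformation of the set of `1`-dimensional subspaces: for every
`1`-dimensional `P` there is a `1`-dimensional `P'` with `P ⊆ X ↔ P' ⊆ f(X)`. -/
theorem stmt15 (hα : Cardinal.aleph0 ≤ Module.rank K V)
    (f g : Submodule K V → Submodule K V)
    (hbij : Set.BijOn f (Gsup K V 1) (Gsup K V 1))
    (hinv : Set.InvOn g f (Gsup K V 1) (Gsup K V 1))
    (hf : ∀ B : Set V, IsBasisSet K V B → ∃ B' : Set V, IsBasisSet K V B' ∧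
      f '' apartmentOf K V (Gsup K V 1) B = apartmentOf K V (Gsup K V 1) B')
    (hg : ∀ B : Set V, IsBasisSet K V B → ∃ B' : Set V, IsBasisSet K V B' ∧
      g '' apartmentOf K V (Gsup K V 1) B = apartmentOf K V (Gsup K V 1) B') :
    ∀ P : Submodule K V, Module.rank K ↥P = 1 →
      ∃ P' : Submodule K V, Module.rank K ↥P' = 1 ∧
        ∀ X ∈ Gsup K V 1, (P ≤ X ↔ P' ≤ f X) := by
  intro P hP
  obtain ⟨v, hvP, hv0, hPv⟩ := (rank_submodule_eq_one_iff P).1 hP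
  obtain rfl : P = K ∙ v := le_antisymm hPv ((span_singleton_le_iff_mem v P).2 hvP)
  obtain ⟨B, hB, hvB⟩ := exists_isBasisSet_mem K hv0
  obtain ⟨B', hB', hfB⟩ := hf B hB
  have hH := hB.span_diff_singleton_mem_apartment hα hvB
  obtain ⟨v', hv', hfH⟩ :=
    hB'.exists_eq_span_diff_singleton_of_mem_apartment (hfB ▸ mem_image_of_mem f hH)
  have hgB' : g '' apartmentOf K V (Gsup K V 1) B' = apartmentOf K V (Gsup K V 1) B := by
    rw [← hfB, hinv.1.image_image' fun _ hX => hX.1]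
  have hgH : g (span K (B' \ {v'})) = span K (B \ {v}) := by rw [← hfH, hinv.1 hH.1]
  refine ⟨K ∙ v', Module.rank_eq_one_iff_finrank_eq_one.2 (finrank_span_singleton
    (hB'.ne_zero hv')), fun X hX => ?_⟩
  simp only [span_singleton_le_iff_mem]
  refine ⟨mem_apply_of_mem_of_image_apartment hα hbij.mapsTo hinv.1 hg hB hB' hfB hvB hv' hfH hX,
    fun hv'X => ?_⟩
  have hvX := mem_apply_of_mem_of_image_apartment hα (hbij.symm hinv.symm).mapsTo hinv.2 hf
    hB' hB hgB' hv' hvB hgH (hbij.mapsTo hX) hv'X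
  rwa [hinv.1 hX] at hvX
end

section
/- Let β be a cardinal with 1 < β ≤ α, let G be one of the Grassmannians G_β(V) or G^β(V), and let A be the apartment of G defined by a basis {e_i}_{i∈I} of V. For distinct i, j ∈ I set A(+i,−j) = A(+i) ∩ A(−j), and call two distinct such subsets A(+i,−j), A(+i',−j') adjacent if i = i' or j = j'. Then every maximal (with respect to inclusion) collection of mutually adjacent subsets of the form A(+i,−j) is either {A(+i,−j)}_{j∈I∖{i}} or {A(+j,−i)}_{j∈I∖{i}} for some i ∈ I. -/
/- Setting: `V` is a left vector space over a division ring `K` whose dimension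
`α = Module.rank K V` is an infinite cardinal. -/

universe u v w

section Defs

variable (K : Type u) (V : Type v) [DivisionRing K] [AddCommGroup V] [Module K V]

/-- `A(+i)`: the elements of the apartment of `G` defined by the basis `b`
which contain the vector `b i`. -/
def aPlus {ι : Type w} (G : Set (Submodule K V)) (b : Module.Basis ι K V) (i : ι) :
    Set (Submodule K V) :=
  {X | X ∈ apartmentOf K V G (Set.range ⇑b) ∧ b i ∈ X}

/-- `A(−i)`: the elements of the apartment of `G` defined by the basis `b`
which do not contain the vector `b i`. -/
def aMinus {ι : Type w} (G : Set (Submodule K V)) (b : Module.Basis ι K V) (i : ι) :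
    Set (Submodule K V) :=
  apartmentOf K V G (Set.range ⇑b) \ aPlus K V G b i

/-- The complementary subset `A(+i,−j) = A(+i) ∩ A(−j)` of the apartment defined by
the basis `b`. -/
def pmSet {ι : Type w} (G : Set (Submodule K V)) (b : Module.Basis ι K V) (i j : ι) :
    Set (Submodule K V) :=
  aPlus K V G b i ∩ aMinus K V G b j

/-- Every member of the collection `S` is of the form `A(+i,−j)` with `i ≠ j`. -/
def PMColl {ι : Type w} (G : Set (Submodule K V)) (b : Module.Basis ι K V)
    (S : Set (Set (Submodule K V))) : Prop :=
  ∀ s ∈ S, ∃ i j : ι, i ≠ j ∧ s = pmSet K V G b i j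

/-- The members of `S` are mutually adjacent: any two distinct members can be written
as `A(+i,−j)` and `A(+i',−j')` with `(i,j) ≠ (i',j')` and `i = i'` or `j = j'`. -/
def PMMutuallyAdjacent {ι : Type w} (G : Set (Submodule K V)) (b : Module.Basis ι K V)
    (S : Set (Set (Submodule K V))) : Prop :=
  ∀ s ∈ S, ∀ t ∈ S, s ≠ t → ∃ i j i' j' : ι, i ≠ j ∧ i' ≠ j' ∧
    s = pmSet K V G b i j ∧ t = pmSet K V G b i' j' ∧
    (i, j) ≠ (i', j') ∧ (i = i' ∨ j = j')

end Defs

variable {K : Type u} {V : Type v} [DivisionRing K] [AddCommGroup V] [Module K V]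

/-!
Apartments of both kinds separate basis vectors: given disjoint finite sets `F₁`, `F₂` of basis
vectors of size at most `β`, some element of the apartment contains `F₁` and misses `F₂`. For
`G_β(V)` take the span of `β` basis vectors including `F₁` and avoiding `F₂` whose complement in
the basis still has `α` elements; for `G^β(V)` swap the roles of this set and its complement.
As `β ≥ 2`, the map `(i, j) ↦ A(+i,−j)` is therefore injective off the diagonal, and the claim
is about index pairs. In a family of pairs any two of which share a coordinate, fix `(i, j)`:
a pair `(a, c)` with `a ≠ i` has `c = j`, a pair `(a, c)` with `c ≠ j` has `a = i`, and two
pairs of these kinds would share no coordinate. So the family lies in the row of `i` or the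
column of `j`, and a maximal one is a whole row or column.
-/

open Cardinal Set Submodule Function

namespace Cardinal

variable {X : Type*}

theorem mk_sdiff_of_finite {R F : Set X} (hR : ℵ₀ ≤ #R) (hF : F.Finite) :
    #(R \ F : Set X) = #R := by
  have hRF : ℵ₀ ≤ #(R \ F : Set X) :=
    infinite_iff.mp ((infinite_coe_iff.mp (infinite_iff.mpr hR)).sdiff hF).to_subtype
  refine (mk_le_mk_of_subset sdiff_subset).antisymm ?_
  calc #R ≤ #(R \ F : Set X) + #F := le_mk_sdiff_add_mk R F
    _ = #(R \ F : Set X) := add_eq_left hRF (hF.lt_aleph0.le.trans hRF)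

theorem exists_subset_mk_eq_mk_sdiff_eq {R : Set X} (hR : ℵ₀ ≤ #R) :
    ∃ A ⊆ R, #A = #R ∧ #(R \ A : Set X) = #R := by
  obtain ⟨e⟩ : Nonempty (R ⊕ R ≃ R) :=
    Cardinal.eq.mp (by rw [mk_sum, lift_id, add_eq_self hR])
  have hpart (f : R → R ⊕ R) (hf : f.Injective) : #(Subtype.val '' range (e ∘ f)) = #R := by
    rw [mk_image_eq Subtype.val_injective, mk_range_eq _ (e.injective.comp hf)]
  refine ⟨_, by simp, hpart _ Sum.inl_injective,
    le_antisymm (mk_le_mk_of_subset sdiff_subset) ?_⟩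
  rw [← hpart _ Sum.inr_injective]
  refine mk_le_mk_of_subset ?_
  rintro _ ⟨x, ⟨a, rfl⟩, rfl⟩
  refine ⟨(e (.inr a)).2, ?_⟩
  rintro ⟨y, ⟨a', ha'⟩, hy⟩
  exact Sum.inl_ne_inr (e.injective (ha'.trans (Subtype.val_injective hy)))

theorem exists_subsuperset_mk_eq {T U : Set X} {c : Cardinal} (hTU : T ⊆ U) (hT : #T ≤ c)
    (hU : c ≤ #U) : ∃ S, T ⊆ S ∧ S ⊆ U ∧ #S = c := by
  rcases lt_or_ge c ℵ₀ with hc | hc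
  · obtain ⟨d, rfl⟩ := exists_add_of_le hT
    have hTfin : #T < ℵ₀ := hT.trans_lt hc
    have hd : d ≤ #(U \ T : Set X) := by
      rw [← add_le_add_iff_of_lt_aleph0 hTfin, add_comm, mk_sdiff_add_mk hTU]
      exact hU
    obtain ⟨C, hCU, rfl⟩ := le_mk_iff_exists_subset.mp hd
    refine ⟨T ∪ C, subset_union_left, union_subset hTU (hCU.trans sdiff_subset), ?_⟩
    exact mk_union_of_disjoint (disjoint_left.mpr fun x hxT hxC => (hCU hxC).2 hxT)
  · obtain ⟨C, hCU, rfl⟩ := le_mk_iff_exists_subset.mp hU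
    refine ⟨T ∪ C, subset_union_left, union_subset hTU hCU, ?_⟩
    exact ((mk_union_le T C).trans (add_eq_right hc hT).le).antisymm
      (mk_le_mk_of_subset subset_union_right)

theorem exists_subset_mk_eq_of_finite {R F₁ F₂ : Set X} {c : Cardinal} (hR : ℵ₀ ≤ #R)
    (hc : c ≤ #R) (hF₁ : F₁.Finite) (hF₂ : F₂.Finite) (hF₁R : F₁ ⊆ R) (hd : Disjoint F₁ F₂)
    (hF₁c : #F₁ ≤ c) :
    ∃ S ⊆ R, F₁ ⊆ S ∧ Disjoint S F₂ ∧ #S = c ∧ #(R \ S : Set X) = #R := by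
  set R' := R \ (F₁ ∪ F₂)
  have hR' : #R' = #R := mk_sdiff_of_finite hR (hF₁.union hF₂)
  obtain ⟨A, hAR', hA, hR'A⟩ := exists_subset_mk_eq_mk_sdiff_eq (hR' ▸ hR)
  obtain ⟨S, hF₁S, hSA, rfl⟩ := exists_subsuperset_mk_eq (subset_union_left (t := A))
    hF₁c (hc.trans ((hA.trans hR').ge.trans (mk_le_mk_of_subset subset_union_right)))
  have hAR : A ⊆ R := hAR'.trans sdiff_subset
  refine ⟨S, hSA.trans (union_subset hF₁R hAR), hF₁S, ?_, rfl, ?_⟩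
  · refine disjoint_left.mpr fun x hxS hxF₂ => ?_
    rcases hSA hxS with hx | hx
    · exact disjoint_left.mp hd hx hxF₂
    · exact (hAR' hx).2 (Or.inr hxF₂)
  · refine (mk_le_mk_of_subset sdiff_subset).antisymm ?_
    rw [← hR', ← hR'A]
    refine mk_le_mk_of_subset fun x ⟨⟨hxR, hxF⟩, hxA⟩ => ⟨hxR, fun hxS => ?_⟩
    rcases hSA hxS with hx | hx
    · exact hxF (Or.inl hx)
    · exact hxA hx

end Cardinal

namespace Module.Basis

variable {ι : Type w} {R : Type*} {M : Type v} [Ring R] [AddCommGroup M] [Module R M]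
  (b : Basis ι R M) {S : Set M}

theorem rank_span_of_subset_range [StrongRankCondition R] (hS : S ⊆ range b) :
    Module.rank R (span R S) = #S := by
  rw [← image_preimage_eq_of_subset hS]
  exact rank_span_set (b.linearIndependent.linearIndepOn _).id_image

theorem isCompl_span_of_subset_range (hS : S ⊆ range b) :
    IsCompl (span R S) (span R (range b \ S)) := by
  have := b.linearIndependent.isCompl_span_image b.span_eq (isCompl_compl (x := b ⁻¹' S))
  rwa [image_compl_preimage, image_preimage_eq_of_subset hS] at this

theorem rank_quotient_span_of_subset_range [StrongRankCondition R] (hS : S ⊆ range b) :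
    Module.rank R (M ⧸ span R S) = #(range b \ S : Set M) := by
  rw [(quotientEquivOfIsCompl _ _ (b.isCompl_span_of_subset_range hS)).rank_eq]
  exact b.rank_span_of_subset_range sdiff_subset

theorem self_mem_span_iff_of_subset_range [Nontrivial R] (hS : S ⊆ range b) {i : ι} :
    b i ∈ span R S ↔ b i ∈ S := by
  conv_lhs => rw [← image_preimage_eq_of_subset hS]
  rw [b.self_mem_span_image, mem_preimage]

end Module.Basis

section Apartment

variable {ι : Type w} (b : Module.Basis ι K V) {S : Set V}

theorem span_mem_Gsub_iff (hS : S ⊆ range b) {β : Cardinal.{v}} :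
    span K S ∈ Gsub K V β ↔ #S = β ∧ #(range b \ S : Set V) = #(range b) := by
  rw [Gsub, mem_ofPred_eq, b.rank_span_of_subset_range hS,
    b.rank_quotient_span_of_subset_range hS, b.mk_range_eq_rank]

theorem span_mem_Gsup_iff (hS : S ⊆ range b) {β : Cardinal.{v}} :
    span K S ∈ Gsup K V β ↔ #S = #(range b) ∧ #(range b \ S : Set V) = β := by
  rw [Gsup, mem_ofPred_eq, b.rank_span_of_subset_range hS,
    b.rank_quotient_span_of_subset_range hS, b.mk_range_eq_rank]

theorem exists_span_mem_of_finite (hα : ℵ₀ ≤ Module.rank K V) {β : Cardinal.{v}}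
    (hβ : β ≤ Module.rank K V) {G : Set (Submodule K V)}
    (hG : G = Gsub K V β ∨ G = Gsup K V β) {F₁ F₂ : Set V} (hF₁ : F₁.Finite)
    (hF₂ : F₂.Finite) (hF₁b : F₁ ⊆ range b) (hF₂b : F₂ ⊆ range b) (hd : Disjoint F₁ F₂)
    (hF₁β : #F₁ ≤ β) (hF₂β : #F₂ ≤ β) :
    ∃ S ⊆ range b, F₁ ⊆ S ∧ Disjoint S F₂ ∧ span K S ∈ G := by
  rw [← b.mk_range_eq_rank] at hα hβ
  rcases hG with rfl | rfl
  · obtain ⟨S, hSb, hF₁S, hSF₂, hS⟩ :=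
      exists_subset_mk_eq_of_finite hα hβ hF₁ hF₂ hF₁b hd hF₁β
    exact ⟨S, hSb, hF₁S, hSF₂, (span_mem_Gsub_iff b hSb).mpr hS⟩
  · obtain ⟨C, hCb, hF₂C, hCF₁, hC, hbC⟩ :=
      exists_subset_mk_eq_of_finite hα hβ hF₂ hF₁ hF₂b hd.symm hF₂β
    refine ⟨range b \ C, sdiff_subset, fun x hx => ⟨hF₁b hx, disjoint_right.mp hCF₁ hx⟩,
      disjoint_left.mpr fun x hx hxF₂ => hx.2 (hF₂C hxF₂), ?_⟩
    rw [span_mem_Gsup_iff b sdiff_subset, sdiff_sdiff_cancel_left hCb]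
    exact ⟨hbC, hC⟩

theorem span_mem_pmSet_iff {G : Set (Submodule K V)} (hS : S ⊆ range b) (hSG : span K S ∈ G)
    {i j : ι} : span K S ∈ pmSet K V G b i j ↔ b i ∈ S ∧ b j ∉ S := by
  have hA : span K S ∈ apartmentOf K V G (range b) := ⟨hSG, S, hS, rfl⟩
  simp only [pmSet, aMinus, aPlus, mem_inter_iff, mem_sdiff, mem_ofPred_eq,
    b.self_mem_span_iff_of_subset_range hS, hA, true_and]

theorem mk_pair_le {X : Type*} (x y : X) : #({x, y} : Set X) ≤ 2 :=
  mk_insert_le.trans (by rw [mk_singleton]; norm_num)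

theorem injOn_pmSet (hα : ℵ₀ ≤ Module.rank K V) {β : Cardinal.{v}} (hβ1 : 1 < β)
    (hβ : β ≤ Module.rank K V) {G : Set (Submodule K V)}
    (hG : G = Gsub K V β ∨ G = Gsup K V β) :
    InjOn (uncurry (pmSet K V G b)) {p | p.1 ≠ p.2} := by
  rintro ⟨i, j⟩ (hij : i ≠ j) ⟨i', j'⟩ (hij' : i' ≠ j')
    (h : pmSet K V G b i j = pmSet K V G b i' j')
  have h2β : (2 : Cardinal) ≤ β := two_le_iff_one_lt.mpr hβ1
  have hpair (x y : ι) : #({b x, b y} : Set V) ≤ β := (mk_pair_le _ _).trans h2β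
  have hsingle (x : ι) : #({b x} : Set V) ≤ β := (mk_singleton _).le.trans hβ1.le
  by_cases hjj' : j = j'
  · subst hjj'
    suffices i = i' by rw [this]
    by_contra hii'
    obtain ⟨S, hSb, hF₁S, hSF₂, hSG⟩ := exists_span_mem_of_finite b hα hβ hG
      (F₁ := {b i}) (F₂ := {b j, b i'}) (toFinite _) (toFinite _) (by simp)
      (by simp [insert_subset_iff]) (by simp [b.injective.eq_iff, hij, hii']) (hsingle i)
      (hpair j i')
    have hS := (span_mem_pmSet_iff b hSb hSG (i := i) (j := j)).mpr
      ⟨hF₁S rfl, fun hjS => disjoint_left.mp hSF₂ hjS (by simp)⟩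
    rw [h, span_mem_pmSet_iff b hSb hSG] at hS
    exact disjoint_left.mp hSF₂ hS.1 (by simp)
  · exfalso
    obtain ⟨S, hSb, hF₁S, hSF₂, hSG⟩ := exists_span_mem_of_finite b hα hβ hG
      (F₁ := {b i, b j'}) (F₂ := {b j}) (toFinite _) (toFinite _)
      (by simp [insert_subset_iff]) (by simp) (by simp [b.injective.eq_iff, hij.symm, hjj'])
      (hpair i j') (hsingle j)
    have hS := (span_mem_pmSet_iff b hSb hSG (i := i) (j := j)).mpr
      ⟨hF₁S (by simp), fun hjS => disjoint_left.mp hSF₂ hjS rfl⟩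
    rw [h, span_mem_pmSet_iff b hSb hSG] at hS
    exact hS.2 (hF₁S (by simp))

end Apartment

theorem Set.Pairwise.forall_fst_eq_or_forall_snd_eq {α β : Type*} {P : Set (α × β)}
    (hP : P.Pairwise fun p q => p.1 = q.1 ∨ p.2 = q.2) {p₀ : α × β} (h₀ : p₀ ∈ P) :
    (∀ p ∈ P, p.1 = p₀.1) ∨ ∀ p ∈ P, p.2 = p₀.2 := by
  by_contra! ⟨⟨p, hp, hp₁⟩, ⟨q, hq, hq₂⟩⟩
  have hp₂ : p.2 = p₀.2 := (hP hp h₀ fun h => hp₁ (h ▸ rfl)).resolve_left hp₁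
  have hq₁ : q.1 = p₀.1 := (hP hq h₀ fun h => hq₂ (h ▸ rfl)).resolve_right hq₂
  rcases hP hp hq (fun h => hp₁ (h ▸ hq₁)) with h | h
  · exact hp₁ (h.trans hq₁)
  · exact hq₂ (h.symm.trans hp₂)

section Adjacency

variable {ι : Type w} (G : Set (Submodule K V)) (b : Module.Basis ι K V)

def pmRow (i : ι) : Set (Set (Submodule K V)) := {s | ∃ j, j ≠ i ∧ s = pmSet K V G b i j}

def pmCol (i : ι) : Set (Set (Submodule K V)) := {s | ∃ j, j ≠ i ∧ s = pmSet K V G b j i}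

theorem pmColl_pmRow (i : ι) : PMColl K V G b (pmRow G b i) := by
  rintro _ ⟨j, hj, rfl⟩
  exact ⟨i, j, hj.symm, rfl⟩

theorem pmColl_pmCol (i : ι) : PMColl K V G b (pmCol G b i) := by
  rintro _ ⟨j, hj, rfl⟩
  exact ⟨j, i, hj, rfl⟩

theorem pmMutuallyAdjacent_pmRow (i : ι) : PMMutuallyAdjacent K V G b (pmRow G b i) := by
  rintro _ ⟨j, hj, rfl⟩ _ ⟨j', hj', rfl⟩ hne
  exact ⟨i, j, i, j', hj.symm, hj'.symm, rfl, rfl, fun h => hne (by cases h; rfl), Or.inl rfl⟩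

theorem pmMutuallyAdjacent_pmCol (i : ι) : PMMutuallyAdjacent K V G b (pmCol G b i) := by
  rintro _ ⟨j, hj, rfl⟩ _ ⟨j', hj', rfl⟩ hne
  exact ⟨j, i, j', i, hj, hj', rfl, rfl, fun h => hne (by cases h; rfl), Or.inr rfl⟩

variable {G b}

theorem PMMutuallyAdjacent.subset_pmRow_or_subset_pmCol {S : Set (Set (Submodule K V))}
    (hadj : PMMutuallyAdjacent K V G b S) (hinj : InjOn (uncurry (pmSet K V G b)) {p | p.1 ≠ p.2})
    (hform : PMColl K V G b S) {i j : ι} (hij : i ≠ j)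
    (hS : pmSet K V G b i j ∈ S) : S ⊆ pmRow G b i ∨ S ⊆ pmCol G b j := by
  set P := {p : ι × ι | p.1 ≠ p.2 ∧ uncurry (pmSet K V G b) p ∈ S}
  have hP : P.Pairwise fun p q => p.1 = q.1 ∨ p.2 = q.2 := by
    rintro p ⟨hp, hpS⟩ q ⟨hq, hqS⟩ hne
    obtain ⟨x, y, x', y', hxy, hxy', hs, ht, -, hshare⟩ :=
      hadj _ hpS _ hqS fun h => hne (hinj hp hq h)
    obtain rfl := hinj hp (show (x, y) ∈ {p : ι × ι | p.1 ≠ p.2} from hxy) hs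
    obtain rfl := hinj hq (show (x', y') ∈ {p : ι × ι | p.1 ≠ p.2} from hxy') ht
    exact hshare
  have hmem (s) (hs : s ∈ S) : ∃ p ∈ P, s = pmSet K V G b p.1 p.2 := by
    obtain ⟨a, c, hac, rfl⟩ := hform s hs
    exact ⟨(a, c), ⟨hac, hs⟩, rfl⟩
  refine (hP.forall_fst_eq_or_forall_snd_eq (p₀ := (i, j)) ⟨hij, hS⟩).imp
    (fun h s hs => ?_) (fun h s hs => ?_)
  · obtain ⟨⟨a, c⟩, hac, rfl⟩ := hmem s hs
    obtain rfl : a = i := h _ hac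
    exact ⟨c, hac.1.symm, rfl⟩
  · obtain ⟨⟨a, c⟩, hac, rfl⟩ := hmem s hs
    obtain rfl : c = j := h _ hac
    exact ⟨a, hac.1, rfl⟩

theorem exists_eq_pmRow_or_eq_pmCol_of_maximal [Nontrivial ι]
    (hinj : InjOn (uncurry (pmSet K V G b)) {p | p.1 ≠ p.2})
    {S : Set (Set (Submodule K V))}
    (hform : PMColl K V G b S) (hadj : PMMutuallyAdjacent K V G b S)
    (hmax : ∀ T : Set (Set (Submodule K V)), S ⊆ T →
      PMColl K V G b T → PMMutuallyAdjacent K V G b T → T = S) :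
    ∃ i, S = pmRow G b i ∨ S = pmCol G b i := by
  obtain ⟨s, hs⟩ : S.Nonempty := by
    obtain ⟨i, j, hij⟩ := exists_pair_ne ι
    rw [nonempty_iff_ne_empty]
    rintro rfl
    have := hmax _ (empty_subset _) (pmColl_pmRow G b i) (pmMutuallyAdjacent_pmRow G b i)
    exact (this ▸ ⟨j, hij.symm, rfl⟩ : pmSet K V G b i j ∈ (∅ : Set _))
  obtain ⟨i, j, hij, rfl⟩ := hform s hs
  rcases hadj.subset_pmRow_or_subset_pmCol hinj hform hij hs with h | h
  · exact ⟨i, .inl (hmax _ h (pmColl_pmRow G b i) (pmMutuallyAdjacent_pmRow G b i)).symm⟩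
  · exact ⟨j, .inr (hmax _ h (pmColl_pmCol G b j) (pmMutuallyAdjacent_pmCol G b j)).symm⟩

end Adjacency

/-- Every maximal collection of mutually adjacent complementary subsets of an apartment
is `{A(+i,−j)}_{j ≠ i}` or `{A(+j,−i)}_{j ≠ i}` for some `i`. -/
theorem stmt17 {ι : Type w} (hα : Cardinal.aleph0 ≤ Module.rank K V)
    (β : Cardinal.{v}) (hβ1 : 1 < β) (hβ : β ≤ Module.rank K V)
    (G : Set (Submodule K V)) (hG : G = Gsub K V β ∨ G = Gsup K V β)
    (b : Module.Basis ι K V)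
    (S : Set (Set (Submodule K V)))
    (hform : PMColl K V G b S)
    (hadj : PMMutuallyAdjacent K V G b S)
    (hmax : ∀ T : Set (Set (Submodule K V)), S ⊆ T →
      PMColl K V G b T → PMMutuallyAdjacent K V G b T → T = S) :
    ∃ i : ι,
      S = {s | ∃ j : ι, j ≠ i ∧ s = pmSet K V G b i j} ∨
      S = {s | ∃ j : ι, j ≠ i ∧ s = pmSet K V G b j i} := by
  have : Infinite ι := (infinite_range_iff b.injective).mp
    (infinite_coe_iff.mp (infinite_iff.mpr (b.mk_range_eq_rank ▸ hα)))
  exact exists_eq_pmRow_or_eq_pmCol_of_maximal (injOn_pmSet b hα hβ1 hβ hG) hform hadj hmax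
end
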